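/- Let (W,w) and (V,v) be fusion frames for H, and let (T_i)_{i=1}^m and (T̃_i)_{i=1}^m be projective reconstruction systems (T_i ∈ L(𝔽^{n_i},H), T_i*T_i = w_i² I, T̃_i*T̃_i = v_i² I) with range(T_i) = W_i, ‖T_i‖ = w_i, range(T̃_i) = V_i, ‖T̃_i‖ = v_i. For orthonormal bases {e_{n_i}^l}_{l=1}^{n_i} of 𝔽^{n_i}, set 𝓕_i = {(1/w_i) T_i e_{n_i}^l}_{l=1}^{n_i} and 𝓖_i = {(1/v_i) T̃_i e_{n_i}^l}_{l=1}^{n_i}. Then the following are equivalent: (1) (V,v,𝓖) is a dual fusion frame system of (W,w,𝓕); (2) Σ_{i=1}^m T̃_i T_i* = I_H (the reconstruction systems are dual). -/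

import Mathlib

/-! The weights `1/wᵢ`, `1/vᵢ` built into the local frames cancel those of the analysis and
synthesis operators, and since `𝓕ᵢ ⊂ Wᵢ` the projections `π_{Wᵢ}` drop out. What remains is
`Σᵢ Σₗ ⟨Tᵢ eˡ, f⟩ T̃ᵢ eˡ`, which is `Σᵢ T̃ᵢ (Tᵢ* f)` after expanding `Tᵢ* f` in the orthonormal
basis `(eˡ)ₗ`. -/

noncomputable section

open scoped InnerProductSpace

variable {𝕜 : Type} [RCLike 𝕜]
variable {H : Type} [NormedAddCommGroup H] [InnerProductSpace 𝕜 H] [FiniteDimensional 𝕜 H]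
variable {m : ℕ}

/-- The Hilbert space `𝒲 = ⊕ᵢ Wᵢ` of a fusion sequence, with the ℓ² inner product. -/
abbrev FFSpace (W : Fin m → Submodule 𝕜 H) : Type := PiLp 2 (fun i => ↥(W i))

/-- The synthesis operator `T_{W,w} : 𝒲 → H`, `(fᵢ)ᵢ ↦ Σᵢ wᵢ fᵢ`. -/
def synthOp (W : Fin m → Submodule 𝕜 H) (w : Fin m → ℝ) : FFSpace W →ₗ[𝕜] H where
  toFun f := ∑ i, (w i : 𝕜) • (f i : H)
  map_add' f g := by
    simp [Finset.sum_add_distrib, smul_add]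
  map_smul' c f := by
    simp [Finset.smul_sum]
    congr 1; funext i; rw [smul_comm]

/-- The analysis operator `T*_{W,w} : H → 𝒲`, `f ↦ (wᵢ π_{Wᵢ} f)ᵢ`. -/
def analysisOp (W : Fin m → Submodule 𝕜 H) (w : Fin m → ℝ) : H →ₗ[𝕜] FFSpace W where
  toFun f := WithLp.toLp 2 (fun i => (w i : 𝕜) • (Submodule.orthogonalProjectionOnto (W i) f))
  map_add' f g := by
    rw [WithLp.ext_iff]; funext i; simp [smul_add]
  map_smul' c f := by
    rw [WithLp.ext_iff]; funext i; simp; rw [smul_comm]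

/-- The coordinate operator `M_{J,W} : 𝒲 → 𝒲`, keeping the coordinates in `J`. -/
def MJ (W : Fin m → Submodule 𝕜 H) (J : Finset (Fin m)) : FFSpace W →ₗ[𝕜] FFSpace W where
  toFun f := WithLp.toLp 2 (fun j => if j ∈ J then f j else 0)
  map_add' f g := by
    rw [WithLp.ext_iff]; funext j; by_cases h : j ∈ J <;> simp [h]
  map_smul' c f := by
    rw [WithLp.ext_iff]; funext j; by_cases h : j ∈ J <;> simp [h]

/-- `Q : 𝒲 → 𝒱` is block-diagonal if `Q M_{j,W} 𝒲 ⊆ M_{j,V} 𝒱` for all `j`. -/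
def IsBlockDiagonal (W V : Fin m → Submodule 𝕜 H) (Q : FFSpace W →ₗ[𝕜] FFSpace V) : Prop :=
  ∀ j, LinearMap.range (Q ∘ₗ MJ W {j}) ≤ LinearMap.range (MJ V {j})

/-- `Q : 𝒲 → 𝒱` is component preserving if `Q M_{j,W} 𝒲 = M_{j,V} 𝒱` for all `j`. -/
def IsComponentPreserving (W V : Fin m → Submodule 𝕜 H) (Q : FFSpace W →ₗ[𝕜] FFSpace V) : Prop :=
  ∀ j, LinearMap.range (Q ∘ₗ MJ W {j}) = LinearMap.range (MJ V {j})

/-- The orthogonal projection onto `U` as an endomorphism of `H`. -/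
def projL (U : Submodule 𝕜 H) : H →ₗ[𝕜] H :=
  U.subtype ∘ₗ (Submodule.orthogonalProjectionOnto U : H →L[𝕜] U).toLinearMap

/-- The coefficient space `⊕ᵢ 𝔽^{Lᵢ}`. -/
abbrev CoefSpace (𝕜 : Type) [RCLike 𝕜] {m : ℕ} (L : Fin m → Type) [∀ i, Fintype (L i)] : Type :=
  PiLp 2 (fun i => EuclideanSpace 𝕜 (L i))

/-- The operator `C_𝓕 : ⊕ᵢ 𝔽^{Lᵢ} → 𝒲`, `((xᵢˡ)ₗ)ᵢ ↦ (Σₗ xᵢˡ fᵢˡ)ᵢ`, associated to a family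
of local frames `𝓕ᵢ = {fᵢˡ}ₗ ⊂ Wᵢ`. -/
def CFop (W : Fin m → Submodule 𝕜 H) (L : Fin m → Type) [∀ i, Fintype (L i)]
    (F : ∀ i, L i → ↥(W i)) : CoefSpace 𝕜 L →ₗ[𝕜] FFSpace W where
  toFun x := WithLp.toLp 2 (fun i => ∑ l, x i l • F i l)
  map_add' x y := by
    rw [WithLp.ext_iff]; funext i
    show ∑ l, (x i l + y i l) • F i l = _
    simp [Finset.sum_add_distrib, add_smul]
  map_smul' c x := by
    rw [WithLp.ext_iff]; funext i
    show ∑ l, (c * x i l) • F i l = _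
    simp [Finset.smul_sum, smul_smul]

/-- The adjoint `C*_𝓕 : 𝒲 → ⊕ᵢ 𝔽^{Lᵢ}`, `(gᵢ)ᵢ ↦ ((⟨fᵢˡ, gᵢ⟩)ₗ)ᵢ` (inner products taken in
Mathlib's convention, conjugate-linear in the first variable). -/
def CFadj (W : Fin m → Submodule 𝕜 H) (L : Fin m → Type) [∀ i, Fintype (L i)]
    (F : ∀ i, L i → ↥(W i)) : FFSpace W →ₗ[𝕜] CoefSpace 𝕜 L where
  toFun g := WithLp.toLp 2 (fun i => WithLp.toLp 2 (fun l => (inner 𝕜 (F i l) (g i) : 𝕜)))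
  map_add' x y := by
    rw [WithLp.ext_iff]; funext i; rw [WithLp.ext_iff]; funext l
    show (inner 𝕜 (F i l) (x i + y i) : 𝕜) = _
    simp [inner_add_right]
  map_smul' c x := by
    rw [WithLp.ext_iff]; funext i; rw [WithLp.ext_iff]; funext l
    show (inner 𝕜 (F i l) (c • x i) : 𝕜) = _
    simp [inner_smul_right]

/-- The local frame `𝓕ᵢ = {(1/wᵢ) Tᵢ eˡ}ₗ` of `Wᵢ = range Tᵢ` associated to a projective
reconstruction system `(Tᵢ)ᵢ`. -/
def FofRS (n : Fin m → ℕ) (T : ∀ i, EuclideanSpace 𝕜 (Fin (n i)) →ₗ[𝕜] H) (w : Fin m → ℝ) :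
    ∀ i, Fin (n i) → ↥(LinearMap.range (T i)) :=
  fun i l => ⟨(w i : 𝕜)⁻¹ • T i (EuclideanSpace.single l 1),
    Submodule.smul_mem _ _ (LinearMap.mem_range_self _ _)⟩

theorem LinearMap.apply_adjoint_eq_sum {E F G ι : Type} [NormedAddCommGroup E]
    [InnerProductSpace 𝕜 E] [FiniteDimensional 𝕜 E] [NormedAddCommGroup F]
    [InnerProductSpace 𝕜 F] [FiniteDimensional 𝕜 F] [AddCommGroup G] [Module 𝕜 G] [Fintype ι]
    (b : OrthonormalBasis ι 𝕜 E) (S : E →ₗ[𝕜] G) (T : E →ₗ[𝕜] F) (f : F) :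
    S (LinearMap.adjoint T f) = ∑ l, ⟪T (b l), f⟫_𝕜 • S (b l) := by
  conv_lhs => rw [← b.sum_repr' (LinearMap.adjoint T f)]
  simp only [map_sum, map_smul, LinearMap.adjoint_inner_right]

theorem synthOp_comp_CFop_comp_CFadj_comp_analysisOp_apply (W V : Fin m → Submodule 𝕜 H)
    (w v : Fin m → ℝ) (L : Fin m → Type) [∀ i, Fintype (L i)] (F : ∀ i, L i → W i)
    (G : ∀ i, L i → V i) (f : H) :
    (synthOp V v ∘ₗ CFop V L G ∘ₗ CFadj W L F ∘ₗ analysisOp W w) f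
      = ∑ i, ∑ l, ((v i * w i : 𝕜) * ⟪(F i l : H), f⟫_𝕜) • (G i l : H) := by
  simp only [LinearMap.comp_apply, synthOp, analysisOp, CFop, CFadj, LinearMap.coe_mk,
    AddHom.coe_mk]
  refine Finset.sum_congr rfl fun i _ => ?_
  rw [Submodule.coe_sum, Finset.smul_sum]
  refine Finset.sum_congr rfl fun l _ => ?_
  rw [inner_smul_right, Submodule.inner_orthogonalProjectionOnto_eq_of_mem_left,
    Submodule.coe_smul, smul_smul, mul_assoc]

theorem synthOp_comp_CFop_comp_CFadj_comp_analysisOp_FofRS (w v : Fin m → ℝ)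
    (hw : ∀ i, w i ≠ 0) (hv : ∀ i, v i ≠ 0) (n : Fin m → ℕ)
    (T tT : ∀ i, EuclideanSpace 𝕜 (Fin (n i)) →ₗ[𝕜] H) :
    synthOp (fun i => LinearMap.range (tT i)) v ∘ₗ
        CFop (fun i => LinearMap.range (tT i)) (fun i => Fin (n i)) (FofRS n tT v) ∘ₗ
        CFadj (fun i => LinearMap.range (T i)) (fun i => Fin (n i)) (FofRS n T w) ∘ₗ
        analysisOp (fun i => LinearMap.range (T i)) w
      = ∑ i, tT i ∘ₗ LinearMap.adjoint (T i) := by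
  ext f
  rw [synthOp_comp_CFop_comp_CFadj_comp_analysisOp_apply, LinearMap.sum_apply]
  refine Finset.sum_congr rfl fun i _ => ?_
  rw [LinearMap.comp_apply, (tT i).apply_adjoint_eq_sum (EuclideanSpace.basisFun _ 𝕜)]
  refine Finset.sum_congr rfl fun l _ => ?_
  have hwi : (w i : 𝕜) ≠ 0 := RCLike.ofReal_ne_zero.mpr (hw i)
  have hvi : (v i : 𝕜) ≠ 0 := RCLike.ofReal_ne_zero.mpr (hv i)
  simp only [FofRS, EuclideanSpace.basisFun_apply, inner_smul_left, map_inv₀,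
    RCLike.conj_ofReal, smul_smul]
  congr 1
  field_simp

theorem dual_fusion_frame_system_iff_dual_reconstruction_system_general
    {𝕜 : Type} [RCLike 𝕜] {H : Type} [NormedAddCommGroup H] [InnerProductSpace 𝕜 H]
    [FiniteDimensional 𝕜 H] {m : ℕ}
    (w v : Fin m → ℝ) (hw : ∀ i, 0 < w i) (hv : ∀ i, 0 < v i)
    (n : Fin m → ℕ)
    (T tT : ∀ i, EuclideanSpace 𝕜 (Fin (n i)) →ₗ[𝕜] H) :
    (synthOp (fun i => LinearMap.range (tT i)) v ∘ₗ
        CFop (fun i => LinearMap.range (tT i)) (fun i => Fin (n i)) (FofRS n tT v) ∘ₗ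
        CFadj (fun i => LinearMap.range (T i)) (fun i => Fin (n i)) (FofRS n T w) ∘ₗ
        analysisOp (fun i => LinearMap.range (T i)) w = LinearMap.id)
    ↔ ∑ i, tT i ∘ₗ LinearMap.adjoint (T i) = LinearMap.id := by
  rw [synthOp_comp_CFop_comp_CFadj_comp_analysisOp_FofRS w v (fun i => (hw i).ne')
    (fun i => (hv i).ne')]

/-- for projective reconstruction systems `(Tᵢ)ᵢ`, `(T̃ᵢ)ᵢ` associated with
fusion frames `(W,w)`, `(V,v)` (`Wᵢ = range Tᵢ`, `Vᵢ = range T̃ᵢ`), and associated local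
frames `𝓕ᵢ = {(1/wᵢ)Tᵢeˡ}`, `𝓖ᵢ = {(1/vᵢ)T̃ᵢeˡ}`, `(V,v,𝓖)` is a dual fusion frame system
of `(W,w,𝓕)` iff `Σᵢ T̃ᵢ Tᵢ* = I`. -/
theorem dual_fusion_frame_system_iff_dual_reconstruction_system
    {𝕜 : Type} [RCLike 𝕜] {H : Type} [NormedAddCommGroup H] [InnerProductSpace 𝕜 H]
    [FiniteDimensional 𝕜 H] {m : ℕ}
    (w v : Fin m → ℝ) (hw : ∀ i, 0 < w i) (hv : ∀ i, 0 < v i)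
    (n : Fin m → ℕ)
    (T tT : ∀ i, EuclideanSpace 𝕜 (Fin (n i)) →ₗ[𝕜] H)
    (hT : ⨆ i, LinearMap.range (T i) = ⊤) (htT : ⨆ i, LinearMap.range (tT i) = ⊤)
    (hTproj : ∀ i, LinearMap.adjoint (T i) ∘ₗ T i = ((w i ^ 2 : ℝ) : 𝕜) • LinearMap.id)
    (htTproj : ∀ i, LinearMap.adjoint (tT i) ∘ₗ tT i = ((v i ^ 2 : ℝ) : 𝕜) • LinearMap.id)
    (hTnorm : ∀ i, ‖LinearMap.toContinuousLinearMap (T i)‖ = w i)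
    (htTnorm : ∀ i, ‖LinearMap.toContinuousLinearMap (tT i)‖ = v i) :
    (synthOp (fun i => LinearMap.range (tT i)) v ∘ₗ
        CFop (fun i => LinearMap.range (tT i)) (fun i => Fin (n i)) (FofRS n tT v) ∘ₗ
        CFadj (fun i => LinearMap.range (T i)) (fun i => Fin (n i)) (FofRS n T w) ∘ₗ
        analysisOp (fun i => LinearMap.range (T i)) w = LinearMap.id)
    ↔ ∑ i, tT i ∘ₗ LinearMap.adjoint (T i) = LinearMap.id :=
  dual_fusion_frame_system_iff_dual_reconstruction_system_general w v hw hv n T tT
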